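/- arXiv:1904.01817 — 4 statements merged into one kernel-verified Lean document; each statement's English description precedes it below -/
import Mathlib

section
/- Let X_1, X_2, ... be iid Pareto(γ) random variables with 0 < γ < 1, S_m = ∑_{i≤m} X_i and M_m = max_{i≤m} X_i. Then the family {S_m / M_m}_{m≥1} is tight. -/
/-!
Fix `m`, put `b = m^(1/γ)` and `a = (m/c)^(1/γ)`, and write `M = M_m`. Each `X_i` is at most
`min X_i b` plus `M` times the indicator of `X_i > b`, so `S_m ≤ T + N * M` with
`T = ∑ min X_i b` and `N = #{i | X_i > b}`. Outside the events `M ≤ a`, `N > K/2`, `T > K a/2`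
this gives `S_m < K M`. By independence `P(M ≤ a) ≤ (1 - c/m)^m ≤ e^(-c)`, while `E N = 1`
and, because `γ < 1`, `E T ≤ C m b^(1-γ) = C b = C c^(1/γ) a` with `C = 1 + 1/(1-γ)`.
Markov's inequality bounds the other two events by `2/K` and `2 C c^(1/γ) / K`, uniformly
in `m`.
-/

open MeasureTheory ProbabilityTheory

/-- The maximum of `f 0, …, f (m-1)` (junk value `0` if `m = 0`). -/
noncomputable def firstMax (m : ℕ) (f : ℕ → ℝ) : ℝ :=
  if hm : 1 ≤ m then
    (Finset.range m).sup' (Finset.nonempty_range_iff.mpr (by omega)) f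
  else 0

open Finset
open scoped ENNReal

lemma le_firstMax {m i : ℕ} (f : ℕ → ℝ) (hi : i < m) : f i ≤ firstMax m f := by
  rw [firstMax, dif_pos (by omega)]
  exact le_sup' f (mem_range.mpr hi)

lemma sum_le_sum_min_add_mul {ι : Type*} (s : Finset ι) (x : ι → ℝ) {b : ℝ} (hb : 0 ≤ b)
    (M : ℝ) (hM : ∀ i ∈ s, x i ≤ M) :
    ∑ i ∈ s, x i ≤ ∑ i ∈ s, min (x i) b + M * ∑ i ∈ s, if b < x i then 1 else 0 := by
  rw [mul_sum, ← sum_add_distrib]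
  refine sum_le_sum fun i hi => ?_
  split_ifs with hbx
  · rw [min_eq_right hbx.le]; linarith [hM i hi]
  · rw [min_eq_left (not_lt.mp hbx)]; simp

lemma sum_div_firstMax_le {m : ℕ} {x : ℕ → ℝ} {a b K : ℝ} (hK : 0 ≤ K) (ha : 0 < a) (hb : 0 ≤ b)
    (hmax : ∃ i < m, a < x i)
    (hN : ∑ i ∈ range m, (if b < x i then 1 else 0) ≤ K / 2)
    (hT : ∑ i ∈ range m, min (x i) b ≤ K / 2 * a) :
    (∑ i ∈ range m, x i) / firstMax m x ≤ K := by
  obtain ⟨j, hj, haj⟩ := hmax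
  have haM : a < firstMax m x := haj.trans_le (le_firstMax x hj)
  have hS := sum_le_sum_min_add_mul (range m) x hb (firstMax m x)
    fun i hi => le_firstMax x (mem_range.mp hi)
  rw [div_le_iff₀ (ha.trans haM)]
  nlinarith [mul_le_mul_of_nonneg_left hN (ha.trans haM).le]

lemma measure_lt_sum_le {ι Ω : Type*} [MeasurableSpace Ω] (μ : Measure Ω) (s : Finset ι)
    {f : ι → Ω → ℝ} (hf : ∀ i ∈ s, AEMeasurable (f i) μ) {t : ℝ} (ht : 0 < t) :
    μ {ω | t < ∑ i ∈ s, f i ω} ≤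
      (∑ i ∈ s, ∫⁻ ω, ENNReal.ofReal (f i ω) ∂μ) / ENNReal.ofReal t := by
  have hmeas : ∀ i ∈ s, AEMeasurable (fun ω => ENNReal.ofReal (f i ω)) μ :=
    fun i hi => ENNReal.measurable_ofReal.comp_aemeasurable (hf i hi)
  calc μ {ω | t < ∑ i ∈ s, f i ω}
      ≤ μ {ω | ENNReal.ofReal t ≤ ∑ i ∈ s, ENNReal.ofReal (f i ω)} := by
        refine measure_mono fun ω hω => (ENNReal.ofReal_le_ofReal hω.le).trans ?_
        exact le_sum_of_subadditive _ ENNReal.ofReal_zero.le (fun _ _ => ENNReal.ofReal_add_le) _ _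
    _ ≤ (∫⁻ ω, ∑ i ∈ s, ENNReal.ofReal (f i ω) ∂μ) / ENNReal.ofReal t :=
        meas_ge_le_lintegral_div (s.aemeasurable_fun_sum hmeas)
          (ENNReal.ofReal_pos.mpr ht).ne' ENNReal.ofReal_ne_top
    _ = _ := by rw [lintegral_finsetSum' s hmeas]

lemma setLIntegral_Ioc_rpow_neg_le {γ b : ℝ} (hγ : γ < 1) (hb : 1 ≤ b) :
    ∫⁻ t in Set.Ioc 1 b, ENNReal.ofReal (t ^ (-γ)) ≤ ENNReal.ofReal (b ^ (1 - γ) / (1 - γ)) := by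
  have hintegrable : IntegrableOn (fun t : ℝ => t ^ (-γ)) (Set.Ioc 1 b) :=
    (intervalIntegral.intervalIntegrable_rpow' (by linarith)).1
  rw [← ofReal_integral_eq_lintegral_ofReal hintegrable ((ae_restrict_iff' measurableSet_Ioc).mpr
    (ae_of_all _ fun t ht => Real.rpow_nonneg (zero_le_one.trans ht.1.le) _))]
  refine ENNReal.ofReal_le_ofReal ?_
  rw [← intervalIntegral.integral_of_le hb, integral_rpow (Or.inl (by linarith)),
    Real.one_rpow, neg_add_eq_sub]
  exact div_le_div_of_nonneg_right (by linarith) (by linarith)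

def HasParetoTail {Ω : Type*} [MeasurableSpace Ω] (μ : Measure Ω) (Y : Ω → ℝ) (γ : ℝ) : Prop :=
  ∀ s : ℝ, 1 ≤ s → μ {ω | s < Y ω} = ENNReal.ofReal (s ^ (-γ))

namespace HasParetoTail

variable {Ω : Type*} [MeasurableSpace Ω] {μ : Measure Ω} {Y : Ω → ℝ} {γ : ℝ}

lemma lintegral_ite_lt (h : HasParetoTail μ Y γ) (hY : Measurable Y) {b : ℝ} (hb : 1 ≤ b) :
    ∫⁻ ω, ENNReal.ofReal (if b < Y ω then 1 else 0) ∂μ = ENNReal.ofReal (b ^ (-γ)) := by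
  rw [← h b hb, ← lintegral_indicator_one (measurableSet_lt measurable_const hY)]
  congr 1
  ext ω
  by_cases hbω : b < Y ω <;> simp [hbω]

variable [IsProbabilityMeasure μ]

lemma measure_le_eq_one_sub (h : HasParetoTail μ Y γ) (hY : Measurable Y) {s : ℝ} (hs : 1 ≤ s) :
    μ {ω | Y ω ≤ s} = 1 - ENNReal.ofReal (s ^ (-γ)) := by
  rw [← h s hs, ← prob_compl_eq_one_sub (measurableSet_lt measurable_const hY)]
  congr 1
  ext ω
  simp

lemma measure_le_one_eq_zero (h : HasParetoTail μ Y γ) (hY : Measurable Y) :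
    μ {ω | Y ω ≤ 1} = 0 := by
  simp [h.measure_le_eq_one_sub hY le_rfl]

lemma ae_one_lt (h : HasParetoTail μ Y γ) (hY : Measurable Y) : ∀ᵐ ω ∂μ, 1 < Y ω := by
  simpa [ae_iff] using h.measure_le_one_eq_zero hY

lemma measure_le_le_exp (h : HasParetoTail μ Y γ) (hY : Measurable Y) (s : ℝ) :
    μ {ω | Y ω ≤ s} ≤ ENNReal.ofReal (Real.exp (-s ^ (-γ))) := by
  rcases lt_or_ge s 1 with hs | hs
  · calc μ {ω | Y ω ≤ s} ≤ μ {ω | Y ω ≤ 1} := measure_mono fun ω hω => le_trans hω hs.le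
      _ = 0 := h.measure_le_one_eq_zero hY
      _ ≤ _ := zero_le
  · have hpos : 0 ≤ s ^ (-γ) := Real.rpow_nonneg (by linarith) _
    rw [h.measure_le_eq_one_sub hY hs, ← ENNReal.ofReal_one, ← ENNReal.ofReal_sub _ hpos]
    exact ENNReal.ofReal_le_ofReal (by linarith [Real.add_one_le_exp (-s ^ (-γ))])

lemma lintegral_min_le (h : HasParetoTail μ Y γ) (hY : Measurable Y) (hγ : γ < 1) {b : ℝ}
    (hb : 1 ≤ b) :
    ∫⁻ ω, ENNReal.ofReal (min (Y ω) b) ∂μ ≤ ENNReal.ofReal ((1 + 1 / (1 - γ)) * b ^ (1 - γ)) := by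
  have hnn : 0 ≤ᵐ[μ] fun ω => min (Y ω) b := by
    filter_upwards [h.ae_one_lt hY] with ω hω
    exact show (0 : ℝ) ≤ min (Y ω) b from le_min (by linarith) (by linarith)
  have hb1 : 1 ≤ b ^ (1 - γ) := Real.one_le_rpow hb (by linarith)
  set F : ℝ → ℝ≥0∞ := fun t => μ {ω | t < min (Y ω) b}
  -- Layer cake: the tail `F` is at most `1` on `(0, 1]`, `t ^ (-γ)` on `(1, b]` and `0` beyond.
  rw [lintegral_eq_lintegral_meas_lt μ hnn (hY.min measurable_const).aemeasurable]
  calc ∫⁻ t in Set.Ioi 0, F t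
      ≤ ∫⁻ t in Set.Ioc 0 1 ∪ Set.Ioc 1 b ∪ Set.Ioi b, F t := by
        refine lintegral_mono_set fun t (ht : 0 < t) => ?_
        rcases le_or_gt t 1 with h1 | h1
        · exact Or.inl (Or.inl ⟨ht, h1⟩)
        rcases le_or_gt t b with h2 | h2
        · exact Or.inl (Or.inr ⟨h1, h2⟩)
        · exact Or.inr h2
    _ ≤ (∫⁻ t in Set.Ioc 0 1, F t) + (∫⁻ t in Set.Ioc 1 b, F t) + ∫⁻ t in Set.Ioi b, F t :=
        (lintegral_union_le F _ _).trans (add_le_add (lintegral_union_le F _ _) le_rfl)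
    _ ≤ (∫⁻ _ in Set.Ioc (0 : ℝ) 1, 1) + (∫⁻ t in Set.Ioc 1 b, ENNReal.ofReal (t ^ (-γ)))
          + ∫⁻ _ in Set.Ioi b, 0 := by
        refine add_le_add (add_le_add ?_ ?_) ?_
        · exact setLIntegral_mono measurable_const fun t _ => prob_le_one
        · refine setLIntegral_mono (by fun_prop) fun t ht => ?_
          rw [← h t ht.1.le]
          exact measure_mono fun ω (hω : t < min (Y ω) b) => hω.trans_le (min_le_left _ _)
        · refine setLIntegral_mono measurable_const fun t (ht : b < t) => ?_
          have hempty : {ω | t < min (Y ω) b} = ∅ :=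
            Set.eq_empty_of_forall_notMem fun ω hω => (hω.trans_le (min_le_right _ _)).not_gt ht
          simp only [F, hempty, measure_empty, le_refl]
    _ ≤ 1 + ENNReal.ofReal (b ^ (1 - γ) / (1 - γ)) := by
        rw [setLIntegral_const, Real.volume_Ioc, lintegral_zero, add_zero, sub_zero,
          ENNReal.ofReal_one, one_mul]
        gcongr
        exact setLIntegral_Ioc_rpow_neg_le hγ hb
    _ = ENNReal.ofReal (1 + b ^ (1 - γ) / (1 - γ)) := by
        rw [ENNReal.ofReal_add zero_le_one (by positivity), ENNReal.ofReal_one]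
    _ ≤ ENNReal.ofReal ((1 + 1 / (1 - γ)) * b ^ (1 - γ)) := by
        gcongr
        rw [add_mul, one_mul, div_eq_mul_one_div, mul_comm]
        gcongr

end HasParetoTail

lemma ProbabilityTheory.iIndepFun.measure_forall_le_le_exp {Ω ι : Type*} [MeasurableSpace Ω]
    {μ : Measure Ω} [IsProbabilityMeasure μ] {X : ι → Ω → ℝ} {γ : ℝ} (hindep : iIndepFun X μ)
    (hX : ∀ i, Measurable (X i)) (htail : ∀ i, HasParetoTail μ (X i) γ) (s : Finset ι) (t : ℝ) :
    μ {ω | ∀ i ∈ s, X i ω ≤ t} ≤ ENNReal.ofReal (Real.exp (-(#s * t ^ (-γ)))) := by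
  have hinter : {ω | ∀ i ∈ s, X i ω ≤ t} = ⋂ i ∈ s, X i ⁻¹' Set.Iic t := by
    ext ω
    simp
  calc μ {ω | ∀ i ∈ s, X i ω ≤ t}
      = ∏ i ∈ s, μ {ω | X i ω ≤ t} := by
        rw [hinter, hindep.meas_biInter fun i _ => ⟨Set.Iic t, measurableSet_Iic, rfl⟩]
        rfl
    _ ≤ ∏ _i ∈ s, ENNReal.ofReal (Real.exp (-t ^ (-γ))) :=
        prod_le_prod' fun i _ => (htail i).measure_le_le_exp (hX i) t
    _ = ENNReal.ofReal (Real.exp (-(#s * t ^ (-γ)))) := by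
        rw [prod_const, ← ENNReal.ofReal_pow (Real.exp_nonneg _), ← Real.exp_nat_mul, mul_neg]

lemma measure_lt_sum_ite_lt_le {Ω ι : Type*} [MeasurableSpace Ω] {μ : Measure Ω}
    {X : ι → Ω → ℝ} {γ : ℝ} (hX : ∀ i, Measurable (X i)) (htail : ∀ i, HasParetoTail μ (X i) γ)
    (s : Finset ι) {b t : ℝ} (hb : 1 ≤ b) (ht : 0 < t) :
    μ {ω | t < ∑ i ∈ s, if b < X i ω then 1 else 0} ≤
      #s * ENNReal.ofReal (b ^ (-γ)) / ENNReal.ofReal t := by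
  calc μ {ω | t < ∑ i ∈ s, if b < X i ω then 1 else 0}
      ≤ (∑ i ∈ s, ∫⁻ ω, ENNReal.ofReal (if b < X i ω then 1 else 0) ∂μ) / ENNReal.ofReal t :=
        measure_lt_sum_le μ s (fun i _ => (Measurable.ite (measurableSet_lt measurable_const
          (hX i)) measurable_const measurable_const).aemeasurable) ht
    _ = #s * ENNReal.ofReal (b ^ (-γ)) / ENNReal.ofReal t := by
        rw [sum_congr rfl fun i _ => (htail i).lintegral_ite_lt (hX i) hb, sum_const, nsmul_eq_mul]

lemma measure_lt_sum_min_le {Ω ι : Type*} [MeasurableSpace Ω] {μ : Measure Ω}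
    [IsProbabilityMeasure μ] {X : ι → Ω → ℝ} {γ : ℝ} (hγ : γ < 1) (hX : ∀ i, Measurable (X i))
    (htail : ∀ i, HasParetoTail μ (X i) γ) (s : Finset ι) {b t : ℝ} (hb : 1 ≤ b) (ht : 0 < t) :
    μ {ω | t < ∑ i ∈ s, min (X i ω) b} ≤
      #s * ENNReal.ofReal ((1 + 1 / (1 - γ)) * b ^ (1 - γ)) / ENNReal.ofReal t := by
  calc μ {ω | t < ∑ i ∈ s, min (X i ω) b}
      ≤ (∑ i ∈ s, ∫⁻ ω, ENNReal.ofReal (min (X i ω) b) ∂μ) / ENNReal.ofReal t :=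
        measure_lt_sum_le μ s (fun i _ => by fun_prop) ht
    _ ≤ (∑ _i ∈ s, ENNReal.ofReal ((1 + 1 / (1 - γ)) * b ^ (1 - γ))) / ENNReal.ofReal t := by
        gcongr with i
        exact (htail i).lintegral_min_le (hX i) hγ hb
    _ = #s * ENNReal.ofReal ((1 + 1 / (1 - γ)) * b ^ (1 - γ)) / ENNReal.ofReal t := by
        rw [sum_const, nsmul_eq_mul]

lemma measure_lt_sum_div_firstMax_le_add {Ω : Type*} [MeasurableSpace Ω] {μ : Measure Ω}
    [IsProbabilityMeasure μ] {γ : ℝ} (hγ : γ < 1) {X : ℕ → Ω → ℝ} (hX : ∀ i, Measurable (X i))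
    (htail : ∀ i, HasParetoTail μ (X i) γ) (m : ℕ) {a b K : ℝ} (ha : 0 < a) (hb : 1 ≤ b)
    (hK : 0 < K) :
    μ {ω | K < (∑ i ∈ range m, X i ω) / firstMax m fun i => X i ω} ≤
      μ {ω | ∀ i ∈ range m, X i ω ≤ a}
        + m * ENNReal.ofReal (b ^ (-γ)) / ENNReal.ofReal (K / 2)
        + m * ENNReal.ofReal ((1 + 1 / (1 - γ)) * b ^ (1 - γ)) / ENNReal.ofReal (K / 2 * a) := by
  set N : Ω → ℝ := fun ω => ∑ i ∈ range m, if b < X i ω then 1 else 0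
  set T : Ω → ℝ := fun ω => ∑ i ∈ range m, min (X i ω) b
  have hsub : {ω | K < (∑ i ∈ range m, X i ω) / firstMax m fun i => X i ω} ⊆
      {ω | ∀ i ∈ range m, X i ω ≤ a} ∪ {ω | K / 2 < N ω} ∪ {ω | K / 2 * a < T ω} := by
    intro ω hω
    by_contra hnot
    simp only [Set.mem_union, Set.mem_ofPred_eq, not_or, not_lt, not_forall, not_le] at hnot
    obtain ⟨⟨⟨i, hi, hai⟩, hN⟩, hT⟩ := hnot
    exact (sum_div_firstMax_le hK.le ha (by linarith) ⟨i, mem_range.mp hi, hai⟩ hN hT).not_gt hω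
  calc μ {ω | K < (∑ i ∈ range m, X i ω) / firstMax m fun i => X i ω}
      ≤ μ {ω | ∀ i ∈ range m, X i ω ≤ a} + μ {ω | K / 2 < N ω} + μ {ω | K / 2 * a < T ω} :=
        (measure_mono hsub).trans ((measure_union_le _ _).trans
          (add_le_add (measure_union_le _ _) le_rfl))
    _ ≤ _ := by
        gcongr
        · simpa only [card_range] using measure_lt_sum_ite_lt_le hX htail (range m) hb (half_pos hK)
        · simpa only [card_range] using measure_lt_sum_min_le hγ hX htail (range m) hb (mul_pos (half_pos hK) ha)

lemma measure_lt_sum_div_firstMax_le {Ω : Type*} [MeasurableSpace Ω] {μ : Measure Ω}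
    [IsProbabilityMeasure μ] {γ : ℝ} (hγ0 : 0 < γ) (hγ1 : γ < 1) {X : ℕ → Ω → ℝ}
    (hX : ∀ i, Measurable (X i)) (hindep : iIndepFun X μ) (htail : ∀ i, HasParetoTail μ (X i) γ)
    {m : ℕ} (hm : 1 ≤ m) {c K : ℝ} (hc : 0 < c) (hK : 0 < K) :
    μ {ω | K < (∑ i ∈ range m, X i ω) / firstMax m fun i => X i ω} ≤
      ENNReal.ofReal (Real.exp (-c)) + ENNReal.ofReal (2 / K)
        + ENNReal.ofReal (2 * ((1 + 1 / (1 - γ)) * c ^ (1 / γ)) / K) := by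
  have hm0 : (0 : ℝ) < m := by exact_mod_cast hm
  set b : ℝ := (m : ℝ) ^ (1 / γ)
  set a : ℝ := ((m : ℝ) / c) ^ (1 / γ)
  have hb1 : 1 ≤ b := Real.one_le_rpow (by exact_mod_cast hm) (by positivity)
  have ha : 0 < a := by positivity
  have hba : b = c ^ (1 / γ) * a := by
    rw [← Real.mul_rpow hc.le (by positivity), mul_div_cancel₀ _ hc.ne']
  have hrpow : ∀ x : ℝ, 0 < x → ∀ r, (x ^ (1 / γ)) ^ r = x ^ (r / γ) := fun x hx r => by
    rw [← Real.rpow_mul hx.le, one_div_mul_eq_div]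
  have hmb : (m : ℝ) * b ^ (-γ) = 1 := by
    rw [hrpow _ hm0, neg_div_self hγ0.ne', Real.rpow_neg_one, mul_inv_cancel₀ hm0.ne']
  have hma : (m : ℝ) * a ^ (-γ) = c := by
    rw [hrpow _ (by positivity), neg_div_self hγ0.ne', Real.rpow_neg_one, inv_div,
      mul_div_cancel₀ _ hm0.ne']
  have hmb' : (m : ℝ) * b ^ (1 - γ) = b := by
    rw [sub_eq_add_neg, Real.rpow_add (by positivity), Real.rpow_one, mul_left_comm, hmb, mul_one]
  refine (measure_lt_sum_div_firstMax_le_add hγ1 hX htail m ha hb1 hK).trans ?_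
  gcongr ?_ + ?_ + ?_
  · simpa [hma] using hindep.measure_forall_le_le_exp hX htail (range m) a
  · rw [← ENNReal.ofReal_natCast, ← ENNReal.ofReal_mul hm0.le, hmb,
      ← ENNReal.ofReal_div_of_pos (by positivity)]
    exact ENNReal.ofReal_le_ofReal (le_of_eq (by field_simp))
  · rw [← ENNReal.ofReal_natCast, ← ENNReal.ofReal_mul hm0.le, mul_left_comm, hmb',
      ← ENNReal.ofReal_div_of_pos (by positivity), hba]
    exact ENNReal.ofReal_le_ofReal (le_of_eq (by field_simp))

/-- For iid Pareto(γ) random variables with `0 < γ < 1`, the family `{S_m / M_m}_{m ≥ 1}`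
of sums divided by maxima is tight. -/
theorem sum_div_max_tight {Ω : Type*} [MeasurableSpace Ω] (μ : Measure Ω)
    [IsProbabilityMeasure μ] (γ : ℝ) (hγ0 : 0 < γ) (hγ1 : γ < 1)
    (X : ℕ → Ω → ℝ) (hmeas : ∀ i, Measurable (X i))
    (hindep : iIndepFun X μ)
    (htail : ∀ i, ∀ s : ℝ, 1 ≤ s → μ {ω | s < X i ω} = ENNReal.ofReal (s ^ (-γ))) :
    ∀ ε : ℝ, 0 < ε → ∃ K : ℝ, ∀ m : ℕ, 1 ≤ m →
      μ {ω | K < (∑ i ∈ Finset.range m, X i ω) / firstMax m fun i => X i ω}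
        ≤ ENNReal.ofReal ε := by
  intro ε hε
  set c : ℝ := max 1 (Real.log (3 / ε))
  set L : ℝ := (1 + 1 / (1 - γ)) * c ^ (1 / γ)
  have hL : 0 ≤ L := by
    have : 0 < 1 - γ := by linarith
    positivity
  have hc : 0 < c := lt_max_of_lt_left one_pos
  have hexp : Real.exp (-c) ≤ ε / 3 := by
    calc Real.exp (-c) ≤ Real.exp (-Real.log (3 / ε)) := by gcongr; exact le_max_right _ _
      _ = ε / 3 := by rw [Real.exp_neg, Real.exp_log (by positivity), inv_div]
  refine ⟨6 * (1 + L) / ε, fun m hm => ?_⟩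
  calc _ ≤ _ := measure_lt_sum_div_firstMax_le hγ0 hγ1 hmeas hindep htail hm hc (by positivity)
    _ ≤ ENNReal.ofReal (ε / 3) + ENNReal.ofReal (ε / 3) + ENNReal.ofReal (ε / 3) := by
        refine add_le_add (add_le_add (ENNReal.ofReal_le_ofReal hexp)
          (ENNReal.ofReal_le_ofReal ?_)) (ENNReal.ofReal_le_ofReal ?_)
        · rw [div_le_iff₀ (by positivity), div_mul_div_comm, le_div_iff₀ (by positivity)]
          nlinarith
        · rw [div_le_iff₀ (by positivity), div_mul_div_comm, le_div_iff₀ (by positivity)]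
          nlinarith
    _ = ENNReal.ofReal ε := by
        rw [← ENNReal.ofReal_add (by positivity) (by positivity),
          ← ENNReal.ofReal_add (by positivity) (by positivity)]
        congr 1
        ring
end

section
/- Let X_1, X_2, ... be iid Pareto random variables with tail index γ ∈ (0,1), S_m their partial sum and M_m^{(2)} the second largest among X_1,...,X_m. Then the family of ratios {S_m / M_m^{(2)}}_{m≥2} is tight. -/
/-!
Put `b = m^{1/γ}`, the scale of the largest of `m` observations. The ratio `S_m / M_m^{(2)}` can
exceed `K` only if
* `M_m^{(2)} < δ b`: at most one observation exceeds `δ b`, a binomial event whose probability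
  is at most `(1 + c) e^{-c/2}` with `c = m P(X > δ b) = δ^{-γ}`;
* some `X_i > T b`: by a union bound this has probability at most `m (T b)^{-γ} = T^{-γ}`;
* otherwise `S_m` equals the sum of the `X_i` truncated at `T b`, which exceeds `K δ b` with
  probability at most `T^{1-γ} / ((1 - γ) K δ)` by Markov's inequality, since a truncated
  Pareto variable has mean at most `(T b)^{1-γ} / (1 - γ)`.
Choosing `δ` small, then `T` and then `K` large makes each of the three probabilities at most
`ε / 3`, uniformly in `m`.
-/

/-- The second-largest value among `f 0, …, f (m-1)` (junk value `0` if `m < 2`),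
realized as `min_j max_{i ≠ j} f i`. -/
noncomputable def secondMax (m : ℕ) (f : ℕ → ℝ) : ℝ :=
  if hm : 2 ≤ m then
    (Finset.range m).inf' (Finset.nonempty_range_iff.mpr (by omega)) fun j =>
      ((Finset.range m).erase j).sup'
        (Finset.card_pos.mp (by
          have h1 := Finset.pred_card_le_card_erase (s := Finset.range m) (a := j)
          simp only [Finset.card_range] at h1
          omega)) f
  else 0

open MeasureTheory ProbabilityTheory Filter Topology Set
open scoped ENNReal Finset

theorem exists_one_add_mul_exp_neg_half_le {ε : ℝ} (hε : 0 < ε) :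
    ∃ c : ℝ, 0 < c ∧ (1 + c) * Real.exp (-(c / 2)) ≤ ε := by
  have hlim : Tendsto (fun c : ℝ => (1 + c) * Real.exp (-(c / 2))) atTop (𝓝 0) := by
    have h := (Real.tendsto_exp_neg_atTop_nhds_zero.add
      ((Real.tendsto_pow_mul_exp_neg_atTop_nhds_zero 1).const_mul 2)).comp
      (tendsto_id.atTop_div_const two_pos)
    refine (h.congr fun c => ?_).trans (by simp)
    simp only [Function.comp_apply, id, pow_one]
    ring
  obtain ⟨c, hc, hc0⟩ := ((hlim.eventually (ge_mem_nhds hε)).and (eventually_gt_atTop 0)).exists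
  exact ⟨c, hc0, hc⟩

theorem one_sub_pow_add_mul_le {n : ℕ} (hn : 2 ≤ n) {p : ℝ} (hp0 : 0 ≤ p) (hp1 : p ≤ 1) :
    (1 - p) ^ n + n * (p * (1 - p) ^ (n - 1)) ≤ (1 + n * p) * Real.exp (-(n * p / 2)) := by
  obtain ⟨k, rfl⟩ : ∃ k, n = k + 1 := ⟨n - 1, by omega⟩
  have hk : (1 : ℝ) ≤ k := by exact_mod_cast (by omega : 1 ≤ k)
  have hpow : (1 - p) ^ k ≤ Real.exp (-((k + 1) * p / 2)) :=
    calc (1 - p) ^ k ≤ Real.exp (-p) ^ k :=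
          pow_le_pow_left₀ (by linarith) (Real.one_sub_le_exp_neg p) k
      _ = Real.exp (-(k * p)) := by rw [← Real.exp_nat_mul]; ring_nf
      _ ≤ Real.exp (-((k + 1) * p / 2)) := Real.exp_le_exp.2 (by nlinarith)
  calc (1 - p) ^ (k + 1) + ↑(k + 1) * (p * (1 - p) ^ (k + 1 - 1))
      = (1 - p) ^ k * (1 + k * p) := by push_cast; ring
    _ ≤ Real.exp (-((k + 1) * p / 2)) * (1 + (k + 1) * p) :=
        mul_le_mul hpow (by nlinarith) (by positivity) (Real.exp_pos _).le
    _ = _ := by push_cast; ring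

theorem exists_forall_ne_lt_of_secondMax_lt {m : ℕ} (hm : 2 ≤ m) {f : ℕ → ℝ} {s : ℝ}
    (h : secondMax m f < s) : ∃ j ∈ Finset.range m, ∀ i ∈ Finset.range m, i ≠ j → f i < s := by
  rw [secondMax, dif_pos hm, Finset.inf'_lt_iff] at h
  obtain ⟨j, hj, hlt⟩ := h
  exact ⟨j, hj, fun i hi hij => (Finset.sup'_lt_iff _).1 hlt i (Finset.mem_erase.2 ⟨hij, hi⟩)⟩

theorem secondMax_lt_or_exists_lt_or_le_sum_truncate {m : ℕ} {f : ℕ → ℝ} {K s t : ℝ}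
    (hK : 0 ≤ K) (hs : 0 < s) (h : K < (∑ i ∈ Finset.range m, f i) / secondMax m f) :
    secondMax m f < s ∨ (∃ i ∈ Finset.range m, t < f i) ∨
      K * s ≤ ∑ i ∈ Finset.range m, max (min (f i) t) 0 := by
  by_contra! hcon
  obtain ⟨hsM, hft, hsum⟩ := hcon
  have hf : ∑ i ∈ Finset.range m, f i ≤ ∑ i ∈ Finset.range m, max (min (f i) t) 0 :=
    Finset.sum_le_sum fun i hi => (min_eq_left (hft i hi)).symm ▸ le_max_left _ _
  rw [lt_div_iff₀ (hs.trans_le hsM)] at h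
  linarith [mul_le_mul_of_nonneg_left hsM hK]

section

variable {Ω ι : Type*} [MeasurableSpace Ω] {μ : Measure Ω}

theorem lintegral_truncate_le_of_tail_le [IsProbabilityMeasure μ] {γ : ℝ} (hγ0 : 0 < γ)
    (hγ1 : γ < 1) {X : Ω → ℝ} (hX : Measurable X)
    (htail : ∀ s : ℝ, 1 ≤ s → μ {ω | s < X ω} ≤ ENNReal.ofReal (s ^ (-γ)))
    {t : ℝ} (ht : 0 ≤ t) :
    ∫⁻ ω, ENNReal.ofReal (max (min (X ω) t) 0) ∂μ ≤ ENNReal.ofReal (t ^ (1 - γ) / (1 - γ)) := by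
  have hlevel : ∀ u ∈ Ioi (0 : ℝ), μ {ω | u < max (min (X ω) t) 0}
      ≤ (Iic t).indicator (fun u => ENNReal.ofReal (u ^ (-γ))) u := by
    intro u (hu0 : 0 < u)
    rcases le_or_gt u t with hut | htu
    · rw [indicator_of_mem (mem_Iic.2 hut)]
      have hsub : {ω | u < max (min (X ω) t) 0} ⊆ {ω | u < X ω} := fun ω hω =>
        ((lt_max_iff.1 hω).resolve_right hu0.not_gt |> lt_min_iff.1).1
      refine (measure_mono hsub).trans ?_
      rcases le_or_gt 1 u with hu1 | hu1
      · exact htail u hu1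
      · refine prob_le_one.trans ?_
        rw [← ENNReal.ofReal_one]
        exact ENNReal.ofReal_le_ofReal
          (Real.one_le_rpow_of_pos_of_le_one_of_nonpos hu0 hu1.le (by linarith))
    · have hempty : {ω | u < max (min (X ω) t) 0} = ∅ :=
        eq_empty_of_forall_notMem fun ω hω =>
          (max_le (min_le_right _ _) ht).not_gt (htu.trans hω)
      rw [hempty, measure_empty]; exact zero_le
  have hint : IntegrableOn (fun u : ℝ => u ^ (-γ)) (Ioc 0 t) :=
    (intervalIntegrable_iff_integrableOn_Ioc_of_le ht).1
      (intervalIntegral.intervalIntegrable_rpow' (by linarith))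
  calc ∫⁻ ω, ENNReal.ofReal (max (min (X ω) t) 0) ∂μ
      = ∫⁻ u in Ioi 0, μ {ω | u < max (min (X ω) t) 0} :=
        lintegral_eq_lintegral_meas_lt μ (ae_of_all _ fun _ => le_max_right _ _)
          ((hX.min measurable_const).max measurable_const).aemeasurable
    _ ≤ ∫⁻ u in Ioi 0, (Iic t).indicator (fun u => ENNReal.ofReal (u ^ (-γ))) u :=
        setLIntegral_mono' measurableSet_Ioi hlevel
    _ = ENNReal.ofReal (∫ u in Ioc 0 t, u ^ (-γ)) := by
        rw [lintegral_indicator measurableSet_Iic, Measure.restrict_restrict measurableSet_Iic,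
          Iic_inter_Ioi, ofReal_integral_eq_lintegral_ofReal hint
            ((ae_restrict_iff' measurableSet_Ioc).2 (ae_of_all _ fun u hu => by
              exact Real.rpow_nonneg hu.1.le _))]
    _ = ENNReal.ofReal (t ^ (1 - γ) / (1 - γ)) := by
      rw [← intervalIntegral.integral_of_le ht, integral_rpow (Or.inl (by linarith)),
        Real.zero_rpow (by linarith), neg_add_eq_sub, sub_zero]

theorem ProbabilityTheory.iIndepFun.measure_exists_forall_ne_le_le [IsProbabilityMeasure μ]
    {X : ι → Ω → ℝ} (hX : ∀ i, Measurable (X i)) (hindep : iIndepFun X μ)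
    (I : Finset ι) {s p : ℝ} (hp0 : 0 ≤ p) (hp1 : p ≤ 1)
    (htail : ∀ i ∈ I, μ {ω | s < X i ω} = ENNReal.ofReal p) :
    μ {ω | ∃ j ∈ I, ∀ i ∈ I, i ≠ j → X i ω ≤ s}
      ≤ ENNReal.ofReal ((1 - p) ^ #I + #I * (p * (1 - p) ^ (#I - 1))) := by
  classical
  let aboveOnlyAt (j : ι) (i : ι) : Set ℝ := if i = j then Ioi s else Iic s
  have hIic : ∀ i ∈ I, μ (X i ⁻¹' Iic s) = ENNReal.ofReal (1 - p) := fun i hi => by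
    have hcompl : X i ⁻¹' Iic s = {ω | s < X i ω}ᶜ := by ext; simp
    rw [hcompl, prob_compl_eq_one_sub (measurableSet_lt measurable_const (hX i)), htail i hi,
      ← ENNReal.ofReal_one, ENNReal.ofReal_sub _ hp0]
  have hnoneAbove : μ (⋂ i ∈ I, X i ⁻¹' Iic s) = ENNReal.ofReal ((1 - p) ^ #I) := by
    rw [hindep.measure_inter_preimage_eq_mul I fun _ _ => measurableSet_Iic,
      Finset.prod_congr rfl hIic, Finset.prod_const, ENNReal.ofReal_pow (by linarith)]
  have hexactlyOne : ∀ j ∈ I, μ (⋂ i ∈ I, X i ⁻¹' aboveOnlyAt j i)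
      = ENNReal.ofReal (p * (1 - p) ^ (#I - 1)) := fun j hj => by
    have hmeas : ∀ i ∈ I, MeasurableSet (aboveOnlyAt j i) := fun i _ => by
      dsimp only [aboveOnlyAt]; split_ifs <;> simp
    have hrest : ∀ i ∈ I.erase j, μ (X i ⁻¹' aboveOnlyAt j i) = ENNReal.ofReal (1 - p) :=
      fun i hi => by
        simp only [aboveOnlyAt, if_neg (Finset.ne_of_mem_erase hi)]
        exact hIic i (Finset.mem_of_mem_erase hi)
    rw [hindep.measure_inter_preimage_eq_mul I hmeas, ← Finset.mul_prod_erase _ _ hj,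
      Finset.prod_congr rfl hrest, Finset.prod_const, Finset.card_erase_of_mem hj]
    simp only [aboveOnlyAt, if_pos rfl]
    rw [show X j ⁻¹' Ioi s = {ω | s < X j ω} from rfl, htail j hj,
      ← ENNReal.ofReal_pow (by linarith), ← ENNReal.ofReal_mul hp0]
  have hsub : {ω | ∃ j ∈ I, ∀ i ∈ I, i ≠ j → X i ω ≤ s}
      ⊆ (⋂ i ∈ I, X i ⁻¹' Iic s) ∪ ⋃ j ∈ I, ⋂ i ∈ I, X i ⁻¹' aboveOnlyAt j i := by
    rintro ω ⟨j, hj, hle⟩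
    by_cases hXj : X j ω ≤ s
    · refine Or.inl (mem_iInter₂.2 fun i hi => ?_)
      by_cases hij : i = j
      · subst hij; exact hXj
      · exact hle i hi hij
    · refine Or.inr (mem_biUnion hj (mem_iInter₂.2 fun i hi => ?_))
      by_cases hij : i = j
      · subst hij; simpa [aboveOnlyAt] using hXj
      · simpa [aboveOnlyAt, hij] using hle i hi hij
  calc μ {ω | ∃ j ∈ I, ∀ i ∈ I, i ≠ j → X i ω ≤ s}
      ≤ μ (⋂ i ∈ I, X i ⁻¹' Iic s) + ∑ j ∈ I, μ (⋂ i ∈ I, X i ⁻¹' aboveOnlyAt j i) :=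
        (measure_mono hsub).trans <| (measure_union_le _ _).trans <|
          add_le_add_right (measure_biUnion_finset_le _ _) _
    _ = _ := by
      rw [hnoneAbove, Finset.sum_congr rfl hexactlyOne, Finset.sum_const, nsmul_eq_mul,
        ← ENNReal.ofReal_natCast, ← ENNReal.ofReal_mul (by positivity),
        ← ENNReal.ofReal_add (by positivity) (by positivity)]

theorem measure_le_sum_truncate_le [IsProbabilityMeasure μ] {γ : ℝ} (hγ0 : 0 < γ) (hγ1 : γ < 1)
    {X : ι → Ω → ℝ} (hX : ∀ i, Measurable (X i)) (I : Finset ι)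
    (htail : ∀ i ∈ I, ∀ s : ℝ, 1 ≤ s → μ {ω | s < X i ω} ≤ ENNReal.ofReal (s ^ (-γ)))
    {t a : ℝ} (ht : 0 ≤ t) (ha : 0 < a) :
    μ {ω | a ≤ ∑ i ∈ I, max (min (X i ω) t) 0}
      ≤ ENNReal.ofReal (#I * (t ^ (1 - γ) / (1 - γ)) / a) := by
  let f : Ω → ℝ≥0∞ := fun ω => ∑ i ∈ I, ENNReal.ofReal (max (min (X i ω) t) 0)
  have hmeas : ∀ i ∈ I, Measurable fun ω => ENNReal.ofReal (max (min (X i ω) t) 0) :=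
    fun i _ => (((hX i).min measurable_const).max measurable_const).ennreal_ofReal
  have hsub : {ω | a ≤ ∑ i ∈ I, max (min (X i ω) t) 0} ⊆ {ω | ENNReal.ofReal a ≤ f ω} :=
    fun ω hω => (ENNReal.ofReal_le_ofReal hω).trans_eq
      (ENNReal.ofReal_sum_of_nonneg fun i _ => le_max_right _ _)
  calc μ {ω | a ≤ ∑ i ∈ I, max (min (X i ω) t) 0}
      ≤ (∫⁻ ω, f ω ∂μ) / ENNReal.ofReal a :=
        (measure_mono hsub).trans <| meas_ge_le_lintegral_div
          (Finset.measurable_sum _ hmeas).aemeasurable (by simpa using ha) ENNReal.ofReal_ne_top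
    _ ≤ (∑ _i ∈ I, ENNReal.ofReal (t ^ (1 - γ) / (1 - γ))) / ENNReal.ofReal a := by
        rw [lintegral_finsetSum I hmeas]
        gcongr with i hi
        exact lintegral_truncate_le_of_tail_le hγ0 hγ1 (hX i) (htail i hi) ht
    _ = ENNReal.ofReal (#I * (t ^ (1 - γ) / (1 - γ)) / a) := by
        rw [Finset.sum_const, nsmul_eq_mul, ← ENNReal.ofReal_natCast,
          ← ENNReal.ofReal_mul (by positivity), ENNReal.ofReal_div_of_pos ha]

theorem measure_biUnion_lt_le_of_card_eq_rpow {γ : ℝ} {X : ι → Ω → ℝ} (I : Finset ι)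
    (htail : ∀ i ∈ I, ∀ s : ℝ, 1 ≤ s → μ {ω | s < X i ω} ≤ ENNReal.ofReal (s ^ (-γ)))
    {b T : ℝ} (hb : 0 < b) (hT : 0 ≤ T) (hTb : 1 ≤ T * b) (hcard : (#I : ℝ) = b ^ γ) :
    μ (⋃ i ∈ I, {ω | T * b < X i ω}) ≤ ENNReal.ofReal (T ^ (-γ)) :=
  calc μ (⋃ i ∈ I, {ω | T * b < X i ω})
      ≤ ∑ _i ∈ I, ENNReal.ofReal ((T * b) ^ (-γ)) :=
        (measure_biUnion_finset_le _ _).trans (Finset.sum_le_sum fun i hi => htail i hi _ hTb)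
    _ = ENNReal.ofReal (T ^ (-γ)) := by
        rw [Finset.sum_const, nsmul_eq_mul, ← ENNReal.ofReal_natCast,
          ← ENNReal.ofReal_mul (by positivity), hcard, Real.mul_rpow hT hb.le,
          mul_left_comm, ← Real.rpow_add hb, add_neg_cancel, Real.rpow_zero, mul_one]

theorem measure_le_sum_truncate_le_of_card_eq_rpow [IsProbabilityMeasure μ] {γ : ℝ}
    (hγ0 : 0 < γ) (hγ1 : γ < 1) {X : ι → Ω → ℝ} (hX : ∀ i, Measurable (X i)) (I : Finset ι)
    (htail : ∀ i ∈ I, ∀ s : ℝ, 1 ≤ s → μ {ω | s < X i ω} ≤ ENNReal.ofReal (s ^ (-γ)))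
    {b T K δ s : ℝ} (hb : 0 < b) (hT : 0 ≤ T) (hK : 0 < K) (hδ : 0 < δ) (hs : δ * b ≤ s)
    (hcard : (#I : ℝ) = b ^ γ) :
    μ {ω | K * s ≤ ∑ i ∈ I, max (min (X i ω) (T * b)) 0}
      ≤ ENNReal.ofReal (T ^ (1 - γ) / (1 - γ) / (K * δ)) := by
  refine (measure_le_sum_truncate_le hγ0 hγ1 hX I htail (by positivity)
    (mul_pos hK ((mul_pos hδ hb).trans_le hs))).trans (ENNReal.ofReal_le_ofReal ?_)
  have hscale : (#I : ℝ) * (T * b) ^ (1 - γ) = T ^ (1 - γ) * b := by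
    rw [hcard, Real.mul_rpow hT hb.le, mul_left_comm, ← Real.rpow_add hb, add_sub_cancel,
      Real.rpow_one]
  calc (#I : ℝ) * ((T * b) ^ (1 - γ) / (1 - γ)) / (K * s)
      = T ^ (1 - γ) / (1 - γ) * b / (K * s) := by rw [← mul_div_assoc, hscale]; ring
    _ ≤ T ^ (1 - γ) / (1 - γ) * b / (K * (δ * b)) := by gcongr
    _ = T ^ (1 - γ) / (1 - γ) / (K * δ) := by field_simp

theorem exists_measure_secondMax_lt_le [IsProbabilityMeasure μ] {γ : ℝ} (hγ0 : 0 < γ)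
    {X : ℕ → Ω → ℝ} (hX : ∀ i, Measurable (X i)) (hindep : iIndepFun X μ)
    (htail : ∀ i, ∀ s : ℝ, 1 ≤ s → μ {ω | s < X i ω} = ENNReal.ofReal (s ^ (-γ)))
    {ε : ℝ} (hε : 0 < ε) :
    ∃ δ > 0, ∀ m : ℕ, 2 ≤ m → ∀ b > 0, (m : ℝ) = b ^ γ →
      μ {ω | secondMax m (fun i => X i ω) < max (δ * b) 1} ≤ ENNReal.ofReal ε := by
  obtain ⟨c, hc0, hcε⟩ := exists_one_add_mul_exp_neg_half_le hε
  refine ⟨c ^ (-γ⁻¹), Real.rpow_pos_of_pos hc0 _, fun m hm b hb hmb => ?_⟩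
  set s := max (c ^ (-γ⁻¹) * b) 1
  set p := s ^ (-γ)
  have hs1 : 1 ≤ s := le_max_right _ _
  have hp0 : 0 ≤ p := by positivity
  have hp1 : p ≤ 1 := Real.rpow_le_one_of_one_le_of_nonpos hs1 (by linarith)
  have hsub : {ω | secondMax m (fun i => X i ω) < s}
      ⊆ {ω | ∃ j ∈ Finset.range m, ∀ i ∈ Finset.range m, i ≠ j → X i ω ≤ s} := fun ω hω =>
    let ⟨j, hj, hlt⟩ := exists_forall_ne_lt_of_secondMax_lt hm hω
    ⟨j, hj, fun i hi hij => (hlt i hi hij).le⟩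
  refine (measure_mono hsub).trans <| (hindep.measure_exists_forall_ne_le_le hX _ hp0 hp1
    fun i _ => htail i s hs1).trans (ENNReal.ofReal_le_ofReal ?_)
  rw [Finset.card_range]
  -- The tail law is only known above `1`, hence the `max`; at `s = 1` every `X i` exceeds `s`
  -- almost surely, so `p = 1` and the bound vanishes.
  rcases le_or_gt (c ^ (-γ⁻¹) * b) 1 with hsmall | hlarge
  · have hp : p = 1 := by simp [p, s, max_eq_right hsmall]
    simp [hp, show m ≠ 0 by omega, show m - 1 ≠ 0 by omega, hε.le]
  · have hmp : (m : ℝ) * p = c := by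
      rw [show p = (c ^ (-γ⁻¹) * b) ^ (-γ) from congrArg (· ^ (-γ)) (max_eq_left hlarge.le),
        Real.mul_rpow (by positivity) hb.le, ← Real.rpow_mul hc0.le, neg_mul_neg,
        inv_mul_cancel₀ hγ0.ne', Real.rpow_one, hmb, mul_left_comm, ← Real.rpow_add hb,
        add_neg_cancel, Real.rpow_zero, mul_one]
    calc (1 - p) ^ m + m * (p * (1 - p) ^ (m - 1)) ≤ (1 + m * p) * Real.exp (-(m * p / 2)) :=
          one_sub_pow_add_mul_le hm hp0 hp1
      _ ≤ ε := by rwa [hmp]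

theorem measure_lt_sum_div_secondMax_le (X : ℕ → Ω → ℝ) (m : ℕ) {K s t : ℝ} (hK : 0 ≤ K)
    (hs : 0 < s) :
    μ {ω | K < (∑ i ∈ Finset.range m, X i ω) / secondMax m fun i => X i ω}
      ≤ μ {ω | secondMax m (fun i => X i ω) < s} + μ (⋃ i ∈ Finset.range m, {ω | t < X i ω})
        + μ {ω | K * s ≤ ∑ i ∈ Finset.range m, max (min (X i ω) t) 0} := by
  refine (measure_mono fun ω hω => ?_).trans <|
    (measure_union_le _ _).trans (add_le_add (measure_union_le _ _) le_rfl)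
  rcases secondMax_lt_or_exists_lt_or_le_sum_truncate hK hs hω with h | ⟨i, hi, h⟩ | h
  exacts [Or.inl (Or.inl h), Or.inl (Or.inr (mem_biUnion hi h)), Or.inr h]

end

/-- For iid Pareto(γ) random variables with `0 < γ < 1`, the family
`{S_m / M_m^{(2)}}_{m ≥ 2}` of sums divided by the second-largest order statistic is
tight. -/
theorem sum_div_secondMax_tight {Ω : Type*} [MeasurableSpace Ω] (μ : Measure Ω)
    [IsProbabilityMeasure μ] (γ : ℝ) (hγ0 : 0 < γ) (hγ1 : γ < 1)
    (X : ℕ → Ω → ℝ) (hmeas : ∀ i, Measurable (X i))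
    (hindep : iIndepFun X μ)
    (htail : ∀ i, ∀ s : ℝ, 1 ≤ s → μ {ω | s < X i ω} = ENNReal.ofReal (s ^ (-γ))) :
    ∀ ε : ℝ, 0 < ε → ∃ K : ℝ, ∀ m : ℕ, 2 ≤ m →
      μ {ω | K < (∑ i ∈ Finset.range m, X i ω) / secondMax m fun i => X i ω}
        ≤ ENNReal.ofReal ε := by
  intro ε hε
  have hε3 : 0 < ε / 3 := by positivity
  obtain ⟨δ, hδ, hsecond⟩ := exists_measure_secondMax_lt_le hγ0 hmeas hindep htail hε3
  obtain ⟨T, hTε, hT1⟩ := (((tendsto_rpow_neg_atTop hγ0).eventually (ge_mem_nhds hε3)).and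
    (eventually_ge_atTop 1)).exists
  have h1γ : 0 < 1 - γ := by linarith
  set K := T ^ (1 - γ) / (1 - γ) / (δ * (ε / 3)) with hK
  refine ⟨K, fun m hm => ?_⟩
  set b := (m : ℝ) ^ γ⁻¹
  have hb1 : 1 ≤ b := Real.one_le_rpow (by exact_mod_cast (by omega : 1 ≤ m)) (by positivity)
  have hmb : (m : ℝ) = b ^ γ := by
    rw [← Real.rpow_mul m.cast_nonneg, inv_mul_cancel₀ hγ0.ne', Real.rpow_one]
  have hcard : (#(Finset.range m) : ℝ) = b ^ γ := by rwa [Finset.card_range]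
  have htail_le : ∀ i ∈ Finset.range m, ∀ s : ℝ, 1 ≤ s →
      μ {ω | s < X i ω} ≤ ENNReal.ofReal (s ^ (-γ)) := fun i _ s hs => (htail i s hs).le
  refine (measure_lt_sum_div_secondMax_le X m (t := T * b) (by positivity)
    (zero_lt_one.trans_le (le_max_right (δ * b) 1))).trans ?_
  rw [show ENNReal.ofReal ε = .ofReal (ε / 3) + .ofReal (ε / 3) + .ofReal (ε / 3) by
    rw [← ENNReal.ofReal_add, ← ENNReal.ofReal_add] <;> first | positivity | ring_nf]
  gcongr
  · exact hsecond m hm b (by positivity) hmb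
  · exact (measure_biUnion_lt_le_of_card_eq_rpow _ htail_le (by positivity) (by positivity)
      (one_le_mul_of_one_le_of_one_le hT1 hb1) hcard).trans (ENNReal.ofReal_le_ofReal hTε)
  · refine (measure_le_sum_truncate_le_of_card_eq_rpow hγ0 hγ1 hmeas _ htail_le (by positivity)
      (by positivity) (by positivity) hδ (le_max_left _ _) hcard).trans_eq ?_
    rw [hK]
    field_simp
end

section
/- In the superlinear fitness-weighted Pólya urn with d colors, fitnesses F_1,...,F_d > 0, exponent β > 1 and initial weights all 1: the probability that color 1 is chosen at every step is at least ∏_{n≥1} F_1 n^β / (F_1 n^β + ∑_{j≥2} F_j), and if F_1 ≥ ε ∑_j F_j then this is at least ∏_{n≥1}(1 - 1/(1 + ε n^β)) > 0. -/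
/-!
On the event that color `i₀` has won the first `n` draws its weight is `n + 1` and every other
weight is still `1`, so there the conditional probability that it wins draw `n + 1` is the
deterministic number `pₙ = F i₀ (n+1)^β / (F i₀ (n+1)^β + ∑_{j ≠ i₀} F j)`. Conditioning step by
step gives `P(i₀ wins the first n draws) = ∏_{k<n} pₖ`, and continuity from above turns this into
equality with `∏' n, pₙ`. Since `1 - pₙ = O(n^(-β))` with `β > 1`, such products converge to a
positive limit, and `F i₀ ≥ ε ∑ F` makes `pₙ` termwise at least
`1 - 1/(1 + ε (n+1)^β) = ε (n+1)^β / (ε (n+1)^β + 1)`.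
-/

open MeasureTheory ProbabilityTheory Filter Topology Finset

lemma Real.multipliable_of_summable_sub_one {ι : Type*} {f : ι → ℝ}
    (hf : Summable fun i => f i - 1) : Multipliable f := by
  simpa using Real.multipliable_one_add_of_summable hf

lemma Real.tprod_pos_of_summable_sub_one {ι : Type*} {f : ι → ℝ} (hpos : ∀ i, 0 < f i)
    (hf : Summable fun i => f i - 1) : 0 < ∏' i, f i := by
  rw [← Real.rexp_tsum_eq_tprod hpos (by simpa using Real.summable_log_one_add_of_summable hf)]
  exact Real.exp_pos _

lemma tprod_le_tprod_of_nonneg {f g : ℕ → ℝ} (hf0 : ∀ n, 0 ≤ f n) (hfg : ∀ n, f n ≤ g n)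
    (hf : Multipliable f) (hg : Multipliable g) : ∏' n, f n ≤ ∏' n, g n :=
  le_of_tendsto_of_tendsto' hf.hasProd.tendsto_prod_nat hg.hasProd.tendsto_prod_nat
    fun _ => prod_le_prod (fun k _ => hf0 k) fun k _ => hfg k

section RpowRatio

variable {a c β : ℝ}

lemma summable_rpow_ratio_sub_one (ha : 0 < a) (hc : 0 ≤ c) (hβ : 1 < β) :
    Summable fun n : ℕ => a * ((n : ℝ) + 1) ^ β / (a * ((n : ℝ) + 1) ^ β + c) - 1 := by
  refine Summable.of_norm_bounded
    (((Real.summable_one_div_nat_add_rpow 1 β).2 hβ).mul_left (c / a)) fun n => ?_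
  have ht : 0 < ((n : ℝ) + 1) ^ β := by positivity
  rw [abs_of_pos (by positivity : (0 : ℝ) < n + 1), Real.norm_eq_abs, abs_sub_comm,
    one_sub_div (by positivity), add_sub_cancel_left, abs_of_nonneg (by positivity),
    div_mul_div_comm, mul_one]
  exact div_le_div_of_nonneg_left hc (by positivity) (by linarith)

lemma multipliable_rpow_ratio (ha : 0 < a) (hc : 0 ≤ c) (hβ : 1 < β) :
    Multipliable fun n : ℕ => a * ((n : ℝ) + 1) ^ β / (a * ((n : ℝ) + 1) ^ β + c) :=
  Real.multipliable_of_summable_sub_one (summable_rpow_ratio_sub_one ha hc hβ)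

lemma tprod_rpow_ratio_pos (ha : 0 < a) (hc : 0 ≤ c) (hβ : 1 < β) :
    0 < ∏' n : ℕ, a * ((n : ℝ) + 1) ^ β / (a * ((n : ℝ) + 1) ^ β + c) :=
  Real.tprod_pos_of_summable_sub_one (fun n => by positivity)
    (summable_rpow_ratio_sub_one ha hc hβ)

lemma rpow_ratio_le_rpow_ratio {b c' : ℝ} (ha : 0 < a) (hb : 0 < b) (hc : 0 ≤ c)
    (hc' : 0 ≤ c') (h : a * c' ≤ b * c) (n : ℕ) :
    a * ((n : ℝ) + 1) ^ β / (a * ((n : ℝ) + 1) ^ β + c)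
      ≤ b * ((n : ℝ) + 1) ^ β / (b * ((n : ℝ) + 1) ^ β + c') := by
  have ht : 0 < ((n : ℝ) + 1) ^ β := by positivity
  rw [div_le_div_iff₀ (by positivity) (by positivity)]
  nlinarith [mul_le_mul_of_nonneg_left h ht.le]

lemma tprod_rpow_ratio_le_tprod_rpow_ratio {b c' : ℝ} (ha : 0 < a) (hb : 0 < b) (hc : 0 ≤ c)
    (hc' : 0 ≤ c') (hβ : 1 < β) (h : a * c' ≤ b * c) :
    ∏' n : ℕ, a * ((n : ℝ) + 1) ^ β / (a * ((n : ℝ) + 1) ^ β + c)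
      ≤ ∏' n : ℕ, b * ((n : ℝ) + 1) ^ β / (b * ((n : ℝ) + 1) ^ β + c') :=
  tprod_le_tprod_of_nonneg (fun n => by positivity) (rpow_ratio_le_rpow_ratio ha hb hc hc' h)
    (multipliable_rpow_ratio ha hc hβ) (multipliable_rpow_ratio hb hc' hβ)

end RpowRatio

section ChainRule

variable {Ω : Type*} {m m0 : MeasurableSpace Ω} {μ : Measure Ω}

lemma measure_inter_eq_ofReal_mul_of_condExp_eq [IsFiniteMeasure μ] (hm : m ≤ m0)
    {A B : Set Ω} {c : ℝ} (hA : MeasurableSet A) (hB : MeasurableSet[m] B) (hc : 0 ≤ c)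
    (h : ∀ᵐ ω ∂μ, ω ∈ B → (μ⟦A | m⟧) ω = c) : μ (A ∩ B) = ENNReal.ofReal c * μ B := by
  have key : μ.real (A ∩ B) = c * μ.real B :=
    calc μ.real (A ∩ B) = ∫ ω in B, A.indicator (fun _ => (1 : ℝ)) ω ∂μ := by
          rw [integral_indicator hA]
          simp [measureReal_restrict_apply hA]
      _ = ∫ ω in B, (μ⟦A | m⟧) ω ∂μ :=
          (setIntegral_condExp hm ((integrable_const (1 : ℝ)).indicator hA) hB).symm
      _ = ∫ _ in B, c ∂μ := setIntegral_congr_ae (hm B hB) h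
      _ = c * μ.real B := by simp [mul_comm]
  rw [← ofReal_measureReal, key, ENNReal.ofReal_mul hc, ofReal_measureReal]

variable {ℱ : Filtration ℕ m0} {A : ℕ → Set Ω} {p : ℕ → ℝ}

lemma measurableSet_biInter_lt (hA : ∀ n, MeasurableSet[ℱ (n + 1)] (A n)) (n : ℕ) :
    MeasurableSet[ℱ n] (⋂ k < n, A k) :=
  MeasurableSet.iInter fun k => MeasurableSet.iInter fun hk => ℱ.mono hk _ (hA k)

variable [IsProbabilityMeasure μ]

lemma measure_biInter_lt_eq_prod (hA : ∀ n, MeasurableSet[ℱ (n + 1)] (A n))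
    (hp : ∀ n, 0 ≤ p n) (h : ∀ n, ∀ᵐ ω ∂μ, ω ∈ ⋂ k < n, A k → (μ⟦A n | ℱ n⟧) ω = p n)
    (n : ℕ) : μ (⋂ k < n, A k) = ENNReal.ofReal (∏ k ∈ range n, p k) := by
  induction n with
  | zero => simp
  | succ n ih =>
    rw [Set.biInter_lt_succ, Set.inter_comm, measure_inter_eq_ofReal_mul_of_condExp_eq (ℱ.le n)
      (ℱ.le _ _ (hA n)) (measurableSet_biInter_lt hA n) (hp n) (h n), ih,
      prod_range_succ, ENNReal.ofReal_mul (prod_nonneg fun k _ => hp k), mul_comm]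

lemma measure_iInter_eq_tprod (hA : ∀ n, MeasurableSet[ℱ (n + 1)] (A n))
    (hp : ∀ n, 0 ≤ p n) (hmul : Multipliable p)
    (h : ∀ n, ∀ᵐ ω ∂μ, ω ∈ ⋂ k < n, A k → (μ⟦A n | ℱ n⟧) ω = p n) :
    μ (⋂ n, A n) = ENNReal.ofReal (∏' n, p n) := by
  have hanti : Antitone fun n => ⋂ k < n, A k := fun a b hab =>
    Set.biInter_subset_biInter_left fun k hk => lt_of_lt_of_le hk hab
  have hlim : Tendsto (fun n => μ (⋂ k < n, A k)) atTop (𝓝 (μ (⋂ n, A n))) := by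
    rw [← Set.biInter_lt_eq_iInter]
    exact tendsto_measure_iInter_atTop
      (fun n => (ℱ.le n _ (measurableSet_biInter_lt hA n)).nullMeasurableSet) hanti
      ⟨0, measure_ne_top _ _⟩
  refine tendsto_nhds_unique hlim ?_
  simp_rw [measure_biInter_lt_eq_prod hA hp h]
  exact (ENNReal.continuous_ofReal.tendsto _).comp hmul.hasProd.tendsto_prod_nat

end ChainRule

lemma eq_update_of_always_chosen {ι : Type*} [DecidableEq ι] {w : ℕ → ι → ℕ} {i : ι} {n : ℕ}
    (hstep : ∀ k < n, ∃ j, w (k + 1) = Function.update (w k) j (w k j + 1))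
    (hi : ∀ k < n, w (k + 1) i = w k i + 1) :
    w n = Function.update (w 0) i (w 0 i + n) := by
  induction n with
  | zero => simp
  | succ n ih =>
    obtain ⟨j, hj⟩ := hstep n n.lt_succ_self
    obtain rfl : j = i := by
      by_contra hji
      have := hi n n.lt_succ_self
      rw [hj, Function.update_of_ne (Ne.symm hji)] at this
      omega
    rw [hj, ih (fun k hk => hstep k (by omega)) (fun k hk => hi k (by omega))]
    simp [add_assoc]

lemma fitness_share_update_one {ι : Type*} [Fintype ι] [DecidableEq ι] (F : ι → ℝ) (β : ℝ)
    (i : ι) (x : ℕ) :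
    F i * ((Function.update (fun _ => (1 : ℕ)) i x i : ℕ) : ℝ) ^ β /
        ∑ k, F k * ((Function.update (fun _ => (1 : ℕ)) i x k : ℕ) : ℝ) ^ β
      = F i * (x : ℝ) ^ β / (F i * (x : ℝ) ^ β + ∑ k ∈ univ.erase i, F k) := by
  rw [← add_sum_erase _ _ (mem_univ i)]
  congr 2
  · simp
  · simp
  · exact sum_congr rfl fun k hk => by simp [Function.update_of_ne (ne_of_mem_erase hk)]

lemma condProb_chosen_eq_of_always_chosen {ι Ω : Type*} [Fintype ι] [DecidableEq ι]
    {m m0 : MeasurableSpace Ω} {μ : Measure Ω} {F : ι → ℝ} {β : ℝ} {W : ℕ → Ω → ι → ℕ} {i : ι}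
    {n : ℕ} (hinit : ∀ ω, W 0 ω = fun _ => 1)
    (hstep : ∀ k ω, ∃ j, W (k + 1) ω = Function.update (W k ω) j (W k ω j + 1))
    (hcond : (μ⟦{ω | W (n + 1) ω i = W n ω i + 1} | m⟧)
      =ᵐ[μ] fun ω => F i * (W n ω i : ℝ) ^ β / ∑ k, F k * (W n ω k : ℝ) ^ β) :
    ∀ᵐ ω ∂μ, ω ∈ ⋂ k < n, {ω | W (k + 1) ω i = W k ω i + 1} →
      (μ⟦{ω | W (n + 1) ω i = W n ω i + 1} | m⟧) ω
        = F i * ((n : ℝ) + 1) ^ β / (F i * ((n : ℝ) + 1) ^ β + ∑ j ∈ univ.erase i, F j) := by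
  filter_upwards [hcond] with ω hω hchosen
  have hW : W n ω = Function.update (W 0 ω) i (W 0 ω i + n) :=
    eq_update_of_always_chosen (w := fun k => W k ω) (fun k _ => hstep k ω)
      (Set.mem_iInter₂.1 hchosen)
  rw [hω, hW, hinit ω, fitness_share_update_one, add_comm _ n, Nat.cast_add_one]

/-- In the superlinear fitness-weighted Pólya urn, the probability that color `0` is
chosen at every step is at least `∏_{n≥1} F_0 n^β / (F_0 n^β + ∑_{j≥1} F_j)`; moreover,
if `F_0 ≥ ε ∑_j F_j`, then it is at least `∏_{n≥1} (1 - 1/(1 + ε n^β)) > 0`. -/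
theorem urn_color_always_chosen {Ω : Type*} [m0 : MeasurableSpace Ω] (μ : Measure Ω)
    [IsProbabilityMeasure μ] (d : ℕ) (hd : 2 ≤ d) (F : Fin d → ℝ)
    (hF : ∀ j, 0 < F j) (β : ℝ) (hβ : 1 < β)
    (ℱ : Filtration ℕ m0) (W : ℕ → Ω → Fin d → ℕ)
    (hadapted : ∀ n, Measurable[ℱ n] (W n))
    (hinit : ∀ ω, W 0 ω = fun _ => 1)
    (hstep : ∀ n ω, ∃ j : Fin d, W (n + 1) ω = Function.update (W n ω) j (W n ω j + 1))
    (hcond : ∀ (n : ℕ) (j : Fin d),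
      (μ⟦{ω' | W (n + 1) ω' j = W n ω' j + 1} | ℱ n⟧)
        =ᵐ[μ] fun ω =>
          (F j * (W n ω j : ℝ) ^ β) / ∑ k, F k * (W n ω k : ℝ) ^ β) :
    ENNReal.ofReal (∏' n : ℕ,
        (F ⟨0, by omega⟩ * ((n : ℝ) + 1) ^ β) /
          (F ⟨0, by omega⟩ * ((n : ℝ) + 1) ^ β +
            ∑ j ∈ Finset.univ.erase (⟨0, by omega⟩ : Fin d), F j))
      ≤ μ (⋂ n : ℕ, {ω | W (n + 1) ω ⟨0, by omega⟩ = W n ω ⟨0, by omega⟩ + 1}) ∧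
    ∀ ε : ℝ, 0 < ε → F ⟨0, by omega⟩ ≥ ε * ∑ j, F j →
      ENNReal.ofReal (∏' n : ℕ, (1 - 1 / (1 + ε * ((n : ℝ) + 1) ^ β)))
          ≤ μ (⋂ n : ℕ, {ω | W (n + 1) ω ⟨0, by omega⟩ = W n ω ⟨0, by omega⟩ + 1}) ∧
        0 < ∏' n : ℕ, (1 - 1 / (1 + ε * ((n : ℝ) + 1) ^ β)) := by
  set i₀ : Fin d := ⟨0, by omega⟩
  set S : ℝ := ∑ j ∈ univ.erase i₀, F j
  have hF₀ : 0 < F i₀ := hF i₀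
  have hS : 0 ≤ S := sum_nonneg fun j _ => (hF j).le
  have hA : ∀ n, MeasurableSet[ℱ (n + 1)] {ω | W (n + 1) ω i₀ = W n ω i₀ + 1} := fun n =>
    measurableSet_eq_fun ((measurable_pi_apply i₀).comp (hadapted (n + 1)))
      ((((measurable_pi_apply i₀).comp (hadapted n)).mono (ℱ.mono n.le_succ) le_rfl).add_const 1)
  have hμ := measure_iInter_eq_tprod hA (fun n => by positivity)
    (multipliable_rpow_ratio hF₀ hS hβ)
    fun n => condProb_chosen_eq_of_always_chosen hinit hstep (hcond n i₀)
  refine ⟨hμ.ge, fun ε hε hFε => ?_⟩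
  have hr : (fun n : ℕ => 1 - 1 / (1 + ε * ((n : ℝ) + 1) ^ β))
      = fun n : ℕ => ε * ((n : ℝ) + 1) ^ β / (ε * ((n : ℝ) + 1) ^ β + 1) := by
    funext n
    field_simp
    ring
  have hεS : ε * S ≤ F i₀ * 1 := by
    rw [mul_one]
    exact (mul_le_mul_of_nonneg_left (sum_le_sum_of_subset_of_nonneg (erase_subset _ _)
      fun j _ _ => (hF j).le) hε.le).trans hFε
  rw [hr]
  exact ⟨(ENNReal.ofReal_le_ofReal
      (tprod_rpow_ratio_le_tprod_rpow_ratio hε hF₀ zero_le_one hS hβ hεS)).trans hμ.ge,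
    tprod_rpow_ratio_pos hε zero_le_one hβ⟩
end

section
/- Let a > 1, ε₁ = (a-1)/8 and let z be an integer with a^h < |z| ≤ 4a^h/(a-1). Define h₁ = min{h' ≥ h : |z| + 2ε₁ ∑_{i=h}^{h'-1} a^i ≤ a^{h'}/2}. Then |z| ≥ a^{h₁-1}/4 and consequently h₁ - h - 1 ≤ log_a(16/(a-1)). -/
/-! Minimality of `h₁` says layer `h₁ - 1` is still bad. Since `2ε₁ ∑_{i=h}^{h₁-2} a^i`
telescopes to `(a^{h₁-1} - a^h)/4`, badness there gives `|z| > a^{h₁-1}/4 + a^h/4`.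
Combined with `|z| ≤ 4a^h/(a-1)` this bounds `a^{h₁-1-h}` by `16/(a-1)`. -/

open Finset Real

theorem sub_le_logb_of_pow_le_mul_pow {a C : ℝ} (ha : 1 < a) {m n : ℕ}
    (hmn : a ^ m ≤ C * a ^ n) : (m : ℝ) - n ≤ logb a C := by
  have ha₀ : 0 < a := zero_lt_one.trans ha
  have hC : 0 < C := pos_of_mul_pos_left ((pow_pos ha₀ m).trans_le hmn) (pow_pos ha₀ n).le
  rw [le_logb_iff_rpow_le ha hC, rpow_sub ha₀, rpow_natCast, rpow_natCast,
    div_le_iff₀ (pow_pos ha₀ n)]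
  exact hmn

/-- With `ε₁ = (a-1)/8` and `a^h < |z| ≤ 4a^h/(a-1)`, the first layer
`h₁ = min{h' ≥ h : |z| + 2ε₁ ∑_{i=h}^{h'-1} a^i ≤ a^{h'}/2}` satisfies
`|z| ≥ a^{h₁-1}/4` and consequently `h₁ - h - 1 ≤ log_a(16/(a-1))`. -/
theorem first_good_layer_bound (a : ℝ) (ha : 1 < a) (h : ℕ) (z : ℤ)
    (hz1 : a ^ h < (|z| : ℝ)) (hz2 : (|z| : ℝ) ≤ 4 * a ^ h / (a - 1))
    (h₁ : ℕ) (hh₁ : h ≤ h₁)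
    (hmem : (|z| : ℝ) + 2 * ((a - 1) / 8) * ∑ i ∈ Finset.Ico h h₁, a ^ i ≤ a ^ h₁ / 2)
    (hmin : ∀ h' : ℕ, h ≤ h' → h' < h₁ →
      ¬((|z| : ℝ) + 2 * ((a - 1) / 8) * ∑ i ∈ Finset.Ico h h', a ^ i ≤ a ^ h' / 2)) :
    a ^ (h₁ - 1) / 4 ≤ (|z| : ℝ) ∧
      (h₁ : ℝ) - (h : ℝ) - 1 ≤ Real.logb a (16 / (a - 1)) := by
  have ha₁ : 0 < a - 1 := sub_pos.mpr ha
  have hpos : 0 < a ^ h := pow_pos (zero_lt_one.trans ha) h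
  have hlt : h < h₁ := by
    refine hh₁.lt_of_ne fun heq => ?_
    subst heq
    rw [Ico_self, sum_empty, mul_zero, add_zero] at hmem
    linarith
  have hdrift :
      2 * ((a - 1) / 8) * ∑ i ∈ Ico h (h₁ - 1), a ^ i = (a ^ (h₁ - 1) - a ^ h) / 4 := by
    linear_combination geom_sum_Ico_mul a (Nat.le_sub_one_of_lt hlt) / 4
  have hbad := hmin (h₁ - 1) (Nat.le_sub_one_of_lt hlt) (Nat.sub_one_lt_of_lt hlt)
  rw [hdrift, not_le] at hbad
  have hlayer : a ^ (h₁ - 1) / 4 ≤ (|z| : ℝ) := by linarith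
  refine ⟨hlayer, ?_⟩
  have hpow : a ^ (h₁ - 1) ≤ 16 / (a - 1) * a ^ h := by
    calc a ^ (h₁ - 1) ≤ 4 * (|z| : ℝ) := by linarith
      _ ≤ 4 * (4 * a ^ h / (a - 1)) := by gcongr
      _ = 16 / (a - 1) * a ^ h := by ring
  have hlog := sub_le_logb_of_pow_le_mul_pow ha hpow
  rwa [Nat.cast_sub (by omega), Nat.cast_one, sub_right_comm] at hlog
end
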